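/- arXiv:1408.5966 — 3 statements merged into one kernel-verified Lean document; each statement's English description precedes it below -/
import Mathlib

section
/- Reordering invariance: for any two linear orders ≺ and ≺' on a finite alphabet Σ and any DFA A over Σ, there exists a DFA A' such that the Parikh image of L(A) ∩ (≺-sorted words) equals the Parikh image of L(A') ∩ (≺'-sorted words). -/
/-- A word is sorted w.r.t. a strict order `r` if consecutive letters are
nondecreasing (related by the reflexive closure of `r`); these are exactly
the words in `f₁* f₂* ⋯ fₙ*` for the `r`-enumeration `f₁ ≺ ⋯ ≺ fₙ`. -/
def SortedWrt {α : Type*} (r : α → α → Prop) (w : List α) : Prop :=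
  w.Pairwise (fun a b => r a b ∨ a = b)

/-- The Parikh image of the `r`-sorted part of the language of a DFA. -/
def orderedParikh {α : Type*} (r : α → α → Prop) {σ : Type*} (A : DFA α σ) :
    Set (Multiset α) :=
  {ψ | ∃ w : List α, w ∈ A.accepts ∧ SortedWrt r w ∧ (↑w : Multiset α) = ψ}

/-!
Fix an enumeration `a₁ ≺ ⋯ ≺ aₙ` of the alphabet. The `≺`-sorted word with Parikh image `m` is
`a₁^{m a₁} ⋯ aₙ^{m aₙ}`, so `A` accepts it iff
`(δ_{aₙ})^{m aₙ} ∘ ⋯ ∘ (δ_{a₁})^{m a₁}` sends the start state into an accepting state,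
where `δ_a = A.step · a`. The tuple of maps `(δ_a)^{m a}` ranges over the finite set `α → σ → σ`
and is updated letter by letter, so the words whose Parikh image lies in the `≺`-ordered
Parikh image form a regular language. A DFA `A'` for it has the same ordered Parikh image for
any other order `≺'`, since every multiset is the Parikh image of a `≺'`-sorted word.
-/

open List

section ReorderingInvariance

variable {α σ : Type*}

lemma exists_pairwise_forall_mem [Fintype α] (r : α → α → Prop) [IsStrictTotalOrder α r] :
    ∃ l : List α, l.Pairwise r ∧ ∀ a, a ∈ l := by
  classical
  let := linearOrderOfSTO r
  exact ⟨Finset.univ.sort (· ≤ ·), (Finset.sortedLT_sort _).pairwise, by simp⟩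

section BlockWord

variable [DecidableEq α] {l : List α}

def blockWord (l : List α) (m : Multiset α) : List α :=
  l.flatMap fun a => replicate (m.count a) a

lemma coe_blockWord (hl : l.Nodup) (hmem : ∀ a, a ∈ l) (m : Multiset α) :
    (blockWord l m : Multiset α) = m := by
  ext b
  rw [Multiset.coe_count, blockWord, count_flatMap,
    sum_map_eq_nsmul_single b _ fun a hab _ => by simp [count_replicate, hab],
    count_eq_one_of_mem hl (hmem b)]
  simp

lemma sortedWrt_blockWord {r : α → α → Prop} (hl : l.Pairwise r) (m : Multiset α) :
    SortedWrt r (blockWord l m) := by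
  refine pairwise_flatMap.2 ⟨fun a _ => pairwise_replicate.2 (Or.inr (Or.inr rfl)), ?_⟩
  exact hl.imp fun hab x hx y hy => by
    rw [eq_of_mem_replicate hx, eq_of_mem_replicate hy]
    exact Or.inl hab

lemma SortedWrt.eq_blockWord {r : α → α → Prop} [Std.Asymm r] (hl : l.Pairwise r)
    (hmem : ∀ a, a ∈ l) {w : List α} (hw : SortedWrt r w) : w = blockWord l w := by
  refine Perm.eq_of_pairwise (fun a b _ _ hab hba => ?_) hw (sortedWrt_blockWord hl _) ?_
  · rcases hab with hab | rfl
    · exact (hba.resolve_left (asymm hab)).symm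
    · rfl
  · exact Quotient.exact (coe_blockWord hl.nodup hmem _).symm

lemma mem_orderedParikh_iff {r : α → α → Prop} [Std.Asymm r] (hl : l.Pairwise r)
    (hmem : ∀ a, a ∈ l) (A : DFA α σ) (m : Multiset α) :
    m ∈ orderedParikh r A ↔ blockWord l m ∈ A.accepts := by
  constructor
  · rintro ⟨w, hwA, hw, rfl⟩
    rwa [← hw.eq_blockWord hl hmem]
  · exact fun h => ⟨_, h, sortedWrt_blockWord hl m, coe_blockWord hl.nodup hmem m⟩

end BlockWord

namespace DFA

variable (M : DFA α σ)

lemma evalFrom_replicate (q : σ) (a : α) (n : ℕ) :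
    M.evalFrom q (replicate n a) = (M.step · a)^[n] q := by
  induction n generalizing q with
  | zero => rfl
  | succ n ih => exact ih (M.step q a)

lemma evalFrom_flatMap_replicate (l : List α) (c : α → ℕ) (q : σ) :
    M.evalFrom q (l.flatMap fun a => replicate (c a) a) =
      l.foldl (fun q a => (M.step · a)^[c a] q) q := by
  induction l generalizing q with
  | nil => rfl
  | cons a l ih => rw [flatMap_cons, evalFrom_of_append, evalFrom_replicate, ih]; rfl

variable [DecidableEq α]

def blockPowers (l : List α) : DFA α (α → σ → σ) where
  step g a := Function.update g a (g a ∘ (M.step · a))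
  start _ := id
  accept := {g | l.foldl (fun q a => g a q) M.start ∈ M.accept}

lemma blockPowers_eval (l : List α) (w : List α) :
    (M.blockPowers l).eval w = fun a => (M.step · a)^[w.count a] := by
  induction w using reverseRecOn with
  | nil => rfl
  | append_singleton w a ih =>
    rw [eval_append_singleton, ih]
    funext b
    by_cases hb : b = a
    · subst hb
      simp [blockPowers]
    · simp [blockPowers, hb, Ne.symm hb]

lemma mem_blockPowers_accepts (l : List α) (w : List α) :
    w ∈ (M.blockPowers l).accepts ↔ blockWord l w ∈ M.accepts := by
  rw [mem_accepts, mem_accepts, blockPowers_eval, eval, blockWord, evalFrom_flatMap_replicate]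
  simp [blockPowers]

end DFA

lemma isRegular_setOf_coe_mem_orderedParikh [Fintype α] [Fintype σ] (r : α → α → Prop)
    [IsStrictTotalOrder α r] (A : DFA α σ) :
    Language.IsRegular {w : List α | (w : Multiset α) ∈ orderedParikh r A} := by
  classical
  obtain ⟨l, hl, hmem⟩ := exists_pairwise_forall_mem r
  refine Language.isRegular_iff.2 ⟨_, inferInstance, A.blockPowers l, Language.ext fun w => ?_⟩
  rw [A.mem_blockPowers_accepts]
  exact (mem_orderedParikh_iff hl hmem A w).symm

lemma orderedParikh_eq_of_accepts_eq [Fintype α] (r : α → α → Prop) [IsStrictTotalOrder α r]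
    (A : DFA α σ) {S : Set (Multiset α)} (hA : A.accepts = {w : List α | (w : Multiset α) ∈ S}) :
    orderedParikh r A = S := by
  classical
  obtain ⟨l, hl, hmem⟩ := exists_pairwise_forall_mem r
  ext m
  rw [mem_orderedParikh_iff hl hmem, hA]
  show (blockWord l m : Multiset α) ∈ S ↔ m ∈ S
  rw [coe_blockWord hl.nodup hmem]

end ReorderingInvariance

/-- Reordering invariance: for any two linear orders `≺`, `≺'` on a finite
alphabet and any DFA `A`, there is a DFA `A'` such that the Parikh image of
`L(A) ∩ (≺-sorted words)` equals the Parikh image of `L(A') ∩ (≺'-sorted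
words)`. -/
theorem stmt9 {α : Type*} [Fintype α] (r r' : α → α → Prop)
    (hr : IsStrictTotalOrder α r) (hr' : IsStrictTotalOrder α r')
    {σ : Type*} [Fintype σ] (A : DFA α σ) :
    ∃ (σ' : Type) (_ : Fintype σ') (A' : DFA α σ'),
      orderedParikh r A = orderedParikh r' A' := by
  obtain ⟨σ', _, A', hA'⟩ := isRegular_setOf_coe_mem_orderedParikh r A
  exact ⟨σ', inferInstance, A', (orderedParikh_eq_of_accepts_eq r' A' hA').symm⟩
end

section
/- Powerset determinization preserves the evaluation semantics: for any alternating bottom-up automaton A on unordered trees whose horizontal descriptor class is closed under conjunction and negation, there exists a vertically deterministic automaton B (with state set the powerset of A's states) such that for every tree t, the evaluation of B on t is the singleton {⟦t⟧_A}, and in particular L(B) = L(A). -/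
/-- Unordered edge-labelled trees (children given by a list, evaluated as a
multiset, so the order is irrelevant for automata semantics). -/
inductive UTree (D : Type*) : Type _
  | node : List (D × UTree D) → UTree D

/-- An alternating bottom-up automaton on unordered trees: transition rules
pair a horizontal descriptor (a property of multisets over
data value × set of states, the class of all such properties being closed
under conjunction and negation) with a target state. -/
structure UAut (D Q : Type*) where
  rules : Set ((Multiset (D × Set Q) → Prop) × Q)
  final : Set Q

/-- Evaluation of a tree to a set of states. -/
def UAut.eval {D Q : Type*} (A : UAut D Q) : UTree D → Set Q
  | .node l =>
    {q | ∃ h, (h, q) ∈ A.rules ∧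
      h ((l.attach.map fun p => (p.1.1, A.eval p.1.2)) : Multiset (D × Set Q))}
  decreasing_by
    cases p with | mk p hp =>
    have := List.sizeOf_lt_of_mem hp
    cases p with | mk d t => simp at this ⊢; omega

/-- The language of an automaton. -/
def UAut.lang {D Q : Type*} (A : UAut D Q) : Set (UTree D) :=
  {t | (A.eval t ∩ A.final).Nonempty}



/-- The powerset determinization of `A`. -/
def detAut {D Q : Type*} (A : UAut D Q) : UAut D (Set Q) where
  rules := {p | p.1 = fun m =>
    p.2 = {q | ∃ h, (h, q) ∈ A.rules ∧ h (m.map fun x => (x.1, ⋃₀ x.2))}}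
  final := {S | (S ∩ A.final).Nonempty}

lemma detAut_eval {D Q : Type*} (A : UAut D Q) :
    ∀ t : UTree D, (detAut A).eval t = {A.eval t}
  | .node l => by
    ext S
    rw [UAut.eval, UAut.eval]
    simp only [Set.mem_setOf_eq, Set.mem_singleton_iff]
    have hmap : (((l.attach.map fun p => (p.1.1, (detAut A).eval p.1.2)) :
        Multiset (D × Set (Set Q))).map fun x : D × Set (Set Q) => (x.1, ⋃₀ x.2))
        = ((l.attach.map fun p => (p.1.1, A.eval p.1.2)) : Multiset (D × Set Q)) := by
      simp only [← Multiset.map_coe]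
      rw [Multiset.map_map]
      refine Multiset.map_congr rfl fun p _ => ?_
      simp [detAut_eval A p.1.2]
    constructor
    · rintro ⟨h, hmem, hh⟩
      simp only [detAut, Set.mem_setOf_eq] at hmem
      rw [hmem] at hh
      rw [hmap] at hh
      exact hh
    · intro hS
      refine ⟨fun m => S = {q | ∃ h, (h, q) ∈ A.rules ∧
        h (m.map fun x => (x.1, ⋃₀ x.2))}, rfl, ?_⟩
      beta_reduce
      rw [hmap, ← hS]
  decreasing_by
    cases p with | mk p hp =>
    have := List.sizeOf_lt_of_mem hp
    cases p with | mk d t => simp at this ⊢; omega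

/-- Powerset determinization preserves the evaluation semantics: there is a
vertically deterministic automaton `B` over the powerset of `A`'s states
whose evaluation of every tree is the singleton of `A`'s evaluation, and in
particular `L(B) = L(A)`. -/
theorem stmt12 {D Q : Type*} (A : UAut D Q) :
    ∃ B : UAut D (Set Q),
      (∀ t : UTree D, B.eval t = {A.eval t}) ∧ B.lang = A.lang := by
  refine ⟨detAut A, detAut_eval A, ?_⟩
  ext t
  show ((detAut A).eval t ∩ (detAut A).final).Nonempty ↔ _
  rw [detAut_eval A t]
  simp only [detAut, Set.singleton_inter_nonempty, Set.mem_setOf_eq]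
  rfl
end

section
/- Greedy decomposition into minimal acceptors: let H be a confluent horizontal automaton with initial state p₀ and a designated set of final states. Call a nonempty multiset M a minimal acceptor at state p if (p, M) →* (p', ∅) for some final p' but no proper nonempty sub-multiset of M rewrites from p to a final state with empty remainder. Then a multiset M satisfies (p₀, M) →* (p, ∅) for some final p if and only if M admits a partition M = M₀ + M₁ + ⋯ + M_k into minimal acceptors, where M₀ is a minimal acceptor at p₀ reaching some final p₁, M₁ is a minimal acceptor at p₁, and so on. -/
/-!
If `M` is accepted from `p` and nonempty, a minimal acceptor `M₀ ≤ M` exists by well-foundedness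
of `<` on multisets. Consuming `M₀` leads from `(p, M₀ + R)` to `(p₁, R)` with `p₁` final; since the
accepting run ends in the normal form `(p', 0)`, confluence of the failure-extended rewriting forces
`(p₁, R) →* (p', 0)`, so `R` is accepted from `p₁` and we recurse on the smaller multiset `R`.
The converse concatenates the runs of the pieces, each lifted by the multiset still to be consumed.
-/

open Relation

/-- One step of horizontal rewriting: `(p, M + {d}) → (p′, M)` if some
transition `(p, φ, p′)` has `d ⊨ φ`. -/
def HStep {P D : Type*} (rules : Set (P × (D → Prop) × P)) :
    P × Multiset D → P × Multiset D → Prop :=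
  fun c c' => ∃ d φ, (c.1, φ, c'.1) ∈ rules ∧ φ d ∧ c.2 = c'.2 + {d}

/-- Failure-extended horizontal rewriting on `Option (P × Multiset D)`, with
`none` the failure element ⊥. -/
def HStepX {P D : Type*} (rules : Set (P × (D → Prop) × P)) :
    Option (P × Multiset D) → Option (P × Multiset D) → Prop :=
  fun c c' =>
    (∃ a b, c = some a ∧ c' = some b ∧ HStep rules a b) ∨
    (∃ a, c = some a ∧ c' = none ∧ a.2 ≠ 0 ∧ ∀ b, ¬ HStep rules a b)

/-- `M` rewrites from `p` to some final state with empty remainder. -/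
def AcceptsFrom {P D : Type*} (rules : Set (P × (D → Prop) × P)) (F : Set P)
    (p : P) (M : Multiset D) : Prop :=
  ∃ p' ∈ F, ReflTransGen (HStep rules) (p, M) (p', 0)

/-- A minimal acceptor at state `p`: a nonempty multiset rewriting from `p` to
a final state with empty remainder, none of whose proper nonempty
sub-multisets does. -/
def MinAcc {P D : Type*} (rules : Set (P × (D → Prop) × P)) (F : Set P)
    (p : P) (M : Multiset D) : Prop :=
  M ≠ 0 ∧ AcceptsFrom rules F p M ∧
    ∀ M' < M, M' ≠ 0 → ¬ AcceptsFrom rules F p M'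

section

variable {P D : Type*} {rules : Set (P × (D → Prop) × P)} {F : Set P}

lemma reflTransGen_hStep_add_right (R : Multiset D) {c c' : P × Multiset D}
    (h : ReflTransGen (HStep rules) c c') :
    ReflTransGen (HStep rules) (c.1, c.2 + R) (c'.1, c'.2 + R) :=
  h.lift (fun c => (c.1, c.2 + R)) fun _ _ ⟨d, φ, hr, hd, he⟩ =>
    ⟨d, φ, hr, hd, by simp [he, add_right_comm]⟩

lemma not_hStep_zero {p : P} {c : P × Multiset D} : ¬ HStep rules (p, 0) c := by
  rintro ⟨d, φ, -, -, he⟩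
  simpa using congrArg Multiset.card he

lemma eq_of_reflTransGen_hStep_zero {p : P} {c : P × Multiset D}
    (h : ReflTransGen (HStep rules) (p, 0) c) : c = (p, 0) := by
  rcases h.cases_head with h | ⟨_, hc, -⟩
  · exact h.symm
  · exact absurd hc not_hStep_zero

lemma hStepX_some_iff {x : Option (P × Multiset D)} {b : P × Multiset D} :
    HStepX rules x (some b) ↔ ∃ a, x = some a ∧ HStep rules a b := by
  simp [HStepX]

lemma not_hStepX_some_zero {p : P} {y : Option (P × Multiset D)} :
    ¬ HStepX rules (some (p, 0)) y := by
  rintro (⟨a, b, ha, -, hs⟩ | ⟨a, ha, -, hne, -⟩) <;> cases Option.some_injective _ ha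
  · exact not_hStep_zero hs
  · exact hne rfl

lemma eq_of_reflTransGen_hStepX_zero {p : P} {y : Option (P × Multiset D)}
    (h : ReflTransGen (HStepX rules) (some (p, 0)) y) : y = some (p, 0) := by
  rcases h.cases_head with h | ⟨_, hc, -⟩
  · exact h.symm
  · exact absurd hc not_hStepX_some_zero

lemma reflTransGen_hStepX_some {a b : P × Multiset D}
    (h : ReflTransGen (HStep rules) a b) : ReflTransGen (HStepX rules) (some a) (some b) :=
  h.lift some fun a b hab => Or.inl ⟨a, b, rfl, rfl, hab⟩

lemma reflTransGen_hStep_of_hStepX {a b : P × Multiset D}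
    (h : ReflTransGen (HStepX rules) (some a) (some b)) : ReflTransGen (HStep rules) a b := by
  generalize hb : some b = y at h
  induction h generalizing b with
  | refl => cases hb; rfl
  | tail _ hstep ih =>
    subst hb
    obtain ⟨c, rfl, hc⟩ := hStepX_some_iff.mp hstep
    exact (ih rfl).tail hc

lemma reflTransGen_hStep_zero_of_confluent
    (hconf : ∀ x y z, ReflTransGen (HStepX rules) x y → ReflTransGen (HStepX rules) x z →
      ∃ w, ReflTransGen (HStepX rules) y w ∧ ReflTransGen (HStepX rules) z w)
    {c c' : P × Multiset D} {p : P}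
    (hacc : ReflTransGen (HStep rules) c (p, 0)) (hc' : ReflTransGen (HStep rules) c c') :
    ReflTransGen (HStep rules) c' (p, 0) := by
  obtain ⟨w, hw, hc'w⟩ := hconf _ _ _ (reflTransGen_hStepX_some hacc) (reflTransGen_hStepX_some hc')
  rw [eq_of_reflTransGen_hStepX_zero hw] at hc'w
  exact reflTransGen_hStep_of_hStepX hc'w

lemma exists_minAcc_le {p : P} {M : Multiset D} (hM : M ≠ 0) (hacc : AcceptsFrom rules F p M) :
    ∃ M₀ ≤ M, MinAcc rules F p M₀ := by
  obtain ⟨M₀, ⟨hle, hne, hacc₀⟩, hmin⟩ := wellFounded_lt.has_min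
    {M' | M' ≤ M ∧ M' ≠ 0 ∧ AcceptsFrom rules F p M'} ⟨M, le_rfl, hM, hacc⟩
  exact ⟨M₀, hle, hne, hacc₀, fun M' hlt hne' hacc' => hmin M' ⟨hlt.le.trans hle, hne', hacc'⟩ hlt⟩

def MinAccDecomposition (rules : Set (P × (D → Prop) × P)) (F : Set P) (p₀ : P)
    (M : Multiset D) : Prop :=
  ∃ (k : ℕ) (Ms : Fin k → Multiset D) (ps : Fin (k + 1) → P),
    ps 0 = p₀ ∧ M = ∑ i : Fin k, Ms i ∧
    (∀ i : Fin k,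
      MinAcc rules F (ps i.castSucc) (Ms i) ∧
      ReflTransGen (HStep rules) (ps i.castSucc, Ms i) (ps i.succ, 0) ∧
      ps i.succ ∈ F) ∧
    ps (Fin.last k) ∈ F

lemma minAccDecomposition_zero {p : P} (hp : p ∈ F) : MinAccDecomposition rules F p 0 :=
  ⟨0, Fin.elim0, fun _ => p, rfl, by simp, fun i => i.elim0, hp⟩

lemma MinAccDecomposition.cons {p p₁ : P} {M₀ M : Multiset D} (hmin : MinAcc rules F p M₀)
    (hpath : ReflTransGen (HStep rules) (p, M₀) (p₁, 0)) (hp₁ : p₁ ∈ F)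
    (hM : MinAccDecomposition rules F p₁ M) : MinAccDecomposition rules F p (M₀ + M) := by
  obtain ⟨k, Ms, ps, rfl, rfl, hseg, hlast⟩ := hM
  refine ⟨k + 1, Fin.cons M₀ Ms, Fin.cons p ps, rfl, (Fin.sum_cons _ _).symm, ?_, ?_⟩
  · refine Fin.cases ⟨hmin, hpath, hp₁⟩ fun i => ?_
    simpa only [← Fin.succ_castSucc, Fin.cons_succ] using hseg i
  · simpa only [← Fin.succ_last, Fin.cons_succ] using hlast

lemma reflTransGen_hStep_sum : ∀ {k : ℕ} (Ms : Fin k → Multiset D) (ps : Fin (k + 1) → P),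
    (∀ i : Fin k, ReflTransGen (HStep rules) (ps i.castSucc, Ms i) (ps i.succ, 0)) →
    ReflTransGen (HStep rules) (ps 0, ∑ i, Ms i) (ps (Fin.last k), 0)
  | 0, _, _, _ => by rw [Fin.sum_univ_zero]; rfl
  | k + 1, Ms, ps, hseg => by
    have hhead := reflTransGen_hStep_add_right (∑ i : Fin k, Ms i.succ) (hseg 0)
    have htail := reflTransGen_hStep_sum (fun i => Ms i.succ) (fun i => ps i.succ)
      fun i => by simpa only [Fin.succ_castSucc] using hseg i.succ
    rw [zero_add] at hhead
    rw [Fin.sum_univ_succ, ← Fin.succ_last]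
    exact hhead.trans htail

lemma MinAccDecomposition.acceptsFrom {p : P} {M : Multiset D}
    (hM : MinAccDecomposition rules F p M) : AcceptsFrom rules F p M := by
  obtain ⟨k, Ms, ps, rfl, rfl, hseg, hlast⟩ := hM
  exact ⟨_, hlast, reflTransGen_hStep_sum Ms ps fun i => (hseg i).2.1⟩

lemma AcceptsFrom.minAccDecomposition
    (hconf : ∀ x y z, ReflTransGen (HStepX rules) x y → ReflTransGen (HStepX rules) x z →
      ∃ w, ReflTransGen (HStepX rules) y w ∧ ReflTransGen (HStepX rules) z w)
    {p : P} {M : Multiset D} (hacc : AcceptsFrom rules F p M) :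
    MinAccDecomposition rules F p M := by
  induction M using WellFoundedLT.induction generalizing p with
  | ind M ih =>
    obtain ⟨p', hp', hpath⟩ := hacc
    rcases eq_or_ne M 0 with rfl | hM
    · obtain ⟨rfl, -⟩ := Prod.ext_iff.mp (eq_of_reflTransGen_hStep_zero hpath)
      exact minAccDecomposition_zero hp'
    obtain ⟨M₀, hle, hmin⟩ := exists_minAcc_le hM ⟨p', hp', hpath⟩
    obtain ⟨R, rfl⟩ := Multiset.le_iff_exists_add.mp hle
    obtain ⟨p₁, hp₁, hpath₀⟩ := hmin.2.1
    have hrest : AcceptsFrom rules F p₁ R := ⟨p', hp', reflTransGen_hStep_zero_of_confluent hconf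
      hpath (by simpa using reflTransGen_hStep_add_right R hpath₀)⟩
    have hlt : R < M₀ + R := lt_add_of_pos_left R (pos_iff_ne_zero.mpr hmin.1)
    exact (ih R hlt hrest).cons hmin hpath₀ hp₁

end

/-- Greedy decomposition into minimal acceptors: under confluence of the
failure-extended rewriting, `M` is accepted from `p₀` iff `M` is a sum
`M₀ + ⋯ + M_{k-1}` of minimal acceptors chained through final states
`p₁, …, p_k`, ending in a final state. -/
theorem stmt16 {P D : Type*} (rules : Set (P × (D → Prop) × P)) (F : Set P)
    (hconf : ∀ x y z, ReflTransGen (HStepX rules) x y → ReflTransGen (HStepX rules) x z →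
      ∃ w, ReflTransGen (HStepX rules) y w ∧ ReflTransGen (HStepX rules) z w)
    (p₀ : P) (M : Multiset D) :
    AcceptsFrom rules F p₀ M ↔
      ∃ (k : ℕ) (Ms : Fin k → Multiset D) (ps : Fin (k + 1) → P),
        ps 0 = p₀ ∧ M = ∑ i : Fin k, Ms i ∧
        (∀ i : Fin k,
          MinAcc rules F (ps i.castSucc) (Ms i) ∧
          ReflTransGen (HStep rules) (ps i.castSucc, Ms i) (ps i.succ, 0) ∧
          ps i.succ ∈ F) ∧
        ps (Fin.last k) ∈ F :=
  ⟨AcceptsFrom.minAccDecomposition hconf, MinAccDecomposition.acceptsFrom⟩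
end
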